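/- Let φ be the monoid homomorphism from the free monoid on one generator t to the free monoid on two generators x, y sending t to xy. Then φ is an lcm-homomorphism (injective, preserving lcms of generators trivially), but φ does not commute with the head function α: α(φ(t²)) = xyxy whereas φ(α(t²)) = xy. -/

import Mathlib

open scoped Pointwise

namespace ArtinPaper

/-- A Coxeter/Artin matrix: `m s t = 0` encodes `m_{s,t} = ∞`. -/
structure ArtinMatrix (S : Type*) where
  m : S → S → ℕ
  symm : ∀ s t, m s t = m t s
  diag : ∀ s, m s s = 1
  off_ne_one : ∀ s t, s ≠ t → m s t ≠ 1

variable {S : Type*} {S' : Type*}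

/-- The alternating word `s t s t ⋯` with `k` letters. -/
def altWord (s t : S) : ℕ → List S
  | 0 => []
  | k + 1 => s :: altWord t s k

/-- The alternating product `a b a b ⋯` with `k` factors. -/
def altProd {A : Type*} [Monoid A] (a b : A) : ℕ → A
  | 0 => 1
  | k + 1 => a * altProd b a k

/-- The braid relations as a relation on the free monoid. -/
def braidRel (M : ArtinMatrix S) (x y : FreeMonoid S) : Prop :=
  ∃ s t : S, s ≠ t ∧ M.m s t ≠ 0 ∧
    x = FreeMonoid.ofList (altWord s t (M.m s t)) ∧
    y = FreeMonoid.ofList (altWord t s (M.m s t))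

def artinCon (M : ArtinMatrix S) : Con (FreeMonoid S) := conGen (braidRel M)

/-- The positive Artin monoid `A_S^+`. -/
def ArtinMonoid (M : ArtinMatrix S) := (artinCon M).Quotient

instance (M : ArtinMatrix S) : Monoid (ArtinMonoid M) :=
  inferInstanceAs (Monoid (artinCon M).Quotient)

/-- The element of the Artin monoid represented by a positive word. -/
def mk (M : ArtinMatrix S) (w : List S) : ArtinMonoid M :=
  (artinCon M).mk' (FreeMonoid.ofList w)

/-- The generator of `A_S^+` associated to `s ∈ S`. -/
def gen (M : ArtinMatrix S) (s : S) : ArtinMonoid M := mk M [s]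

/-- A word contains the square of a generator. -/
def HasSquare (w : List S) : Prop := ∃ (u v : List S) (s : S), w = u ++ s :: s :: v

/-- An element of the Artin monoid is reduced (square free) if no positive word
representing it contains the square of a generator. -/
def Reduced (M : ArtinMatrix S) (g : ArtinMonoid M) : Prop :=
  ∀ w : List S, mk M w = g → ¬ HasSquare w

/-- Right divisibility: `a` right-divides `b`. (Note: `a ∣ b` is left divisibility.) -/
def RDvd {A : Type*} [Monoid A] (a b : A) : Prop := ∃ c, b = c * a

/-- `d` is a left gcd of `a` and `b` (for left divisibility `∣`). -/
def IsLeftGcd {A : Type*} [Monoid A] (d a b : A) : Prop :=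
  d ∣ a ∧ d ∣ b ∧ ∀ e, e ∣ a → e ∣ b → e ∣ d

/-- `l` is a left lcm of `a` and `b` (for left divisibility `∣`). -/
def IsLeftLcm {A : Type*} [Monoid A] (l a b : A) : Prop :=
  a ∣ l ∧ b ∣ l ∧ ∀ e, a ∣ e → b ∣ e → l ∣ e

/-- `d` is a right gcd of `a` and `b`. -/
def IsRightGcd {A : Type*} [Monoid A] (d a b : A) : Prop :=
  RDvd d a ∧ RDvd d b ∧ ∀ e, RDvd e a → RDvd e b → RDvd e d

/-- `h` is the head `α(g)`: the greatest reduced left divisor of `g`. -/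
def IsHead (M : ArtinMatrix S) (h g : ArtinMonoid M) : Prop :=
  Reduced M h ∧ h ∣ g ∧ ∀ h', Reduced M h' → h' ∣ g → h' ∣ h

/-- The relations `s·s = 1` on the free monoid. -/
def squareRel (x y : FreeMonoid S) : Prop :=
  ∃ s : S, x = FreeMonoid.ofList [s, s] ∧ y = 1

def coxCon (M : ArtinMatrix S) : Con (FreeMonoid S) :=
  conGen (fun x y => braidRel M x y ∨ squareRel x y)

/-- The Coxeter group `W_S`, realized as the quotient monoid of the free monoid by the
braid relations together with `s² = 1` (as a set it is the Coxeter group). -/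
def CoxMonoid (M : ArtinMatrix S) := (coxCon M).Quotient

instance (M : ArtinMatrix S) : Monoid (CoxMonoid M) :=
  inferInstanceAs (Monoid (coxCon M).Quotient)

def coxmk (M : ArtinMatrix S) (w : List S) : CoxMonoid M :=
  (coxCon M).mk' (FreeMonoid.ofList w)

/-- The canonical projection `i : A_S^+ → W_S`. -/
def proj (M : ArtinMatrix S) : ArtinMonoid M →* CoxMonoid M :=
  Con.lift _ (coxCon M).mk' (by
    apply Con.conGen_le.mpr
    intro x y h
    exact (Con.ker_rel _).mpr ((Con.eq _).mpr (ConGen.Rel.of x y (Or.inl h))))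

/-- The length of an element of `A_S^+` (length of any representing word). -/
noncomputable def lengthOf (M : ArtinMatrix S) (g : ArtinMonoid M) : ℕ :=
  sInf {n | ∃ w : List S, mk M w = g ∧ w.length = n}

/-- The standard parabolic submonoid `A_T^+`. -/
def parabolicM (M : ArtinMatrix S) (T : Set S) : Submonoid (ArtinMonoid M) :=
  Submonoid.closure (gen M '' T)

/-- Restriction of the Coxeter matrix to a subset. -/
def ArtinMatrix.restrict (M : ArtinMatrix S) (T : Set S) : ArtinMatrix T where
  m a b := M.m a b
  symm a b := M.symm a b
  diag a := M.diag a
  off_ne_one a b h := M.off_ne_one a b (fun he => h (Subtype.ext he))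

/-- `T ⊆ S` is of spherical type iff the Coxeter group `W_T` is finite. -/
def Spherical (M : ArtinMatrix S) (T : Set S) : Prop :=
  Finite (CoxMonoid (M.restrict T))

/-- `Δ` is the Garside element `Δ_T`, i.e. the left lcm of the generators in `T`. -/
def IsDeltaOf (M : ArtinMatrix S) (Δ : ArtinMonoid M) (T : Set S) : Prop :=
  (∀ t ∈ T, gen M t ∣ Δ) ∧ ∀ g : ArtinMonoid M, (∀ t ∈ T, gen M t ∣ g) → Δ ∣ g

/-- The data of an LCM-homomorphism (monoid level): a map `p` satisfying (L0)–(L3),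
together with the Garside elements `Δ_{p(s)}`. -/
structure LCMHom (M : ArtinMatrix S) (M' : ArtinMatrix S') where
  p : S → Set S'
  p_ne : ∀ s, (p s).Nonempty
  L0 : ∀ s t, s ≠ t → Disjoint (p s) (p t)
  L1 : ∀ s, Spherical M' (p s)
  Δ : S → ArtinMonoid M'
  hΔ : ∀ s, IsDeltaOf M' (Δ s) (p s)
  L2 : ∀ s t, s ≠ t → M.m s t ≠ 0 →
    altProd (Δ s) (Δ t) (M.m s t) = altProd (Δ t) (Δ s) (M.m s t) ∧
    IsLeftLcm (altProd (Δ s) (Δ t) (M.m s t)) (Δ s) (Δ t)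
  L3 : ∀ s t, s ≠ t → M.m s t = 0 →
    (∀ u ∈ p s, ¬ Spherical M' (insert u (p t))) ∧
    (∀ u ∈ p t, ¬ Spherical M' (insert u (p s)))

def pSet {M : ArtinMatrix S} {M' : ArtinMatrix S'} (P : LCMHom M M') (X : Set S) : Set S' :=
  ⋃ s ∈ X, P.p s

/-- A (general) lcm-homomorphism: sends generators to nontrivial elements
and preserves lcms of pairs of generators (with the convention `φ(∞) = ∞`). -/
def IsLcmHom (M : ArtinMatrix S) (M' : ArtinMatrix S')
    (φ : ArtinMonoid M →* ArtinMonoid M') : Prop :=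
  (∀ s : S, φ (gen M s) ≠ 1) ∧
  (∀ s t : S, ∀ l, IsLeftLcm l (gen M s) (gen M t) →
      IsLeftLcm (φ l) (φ (gen M s)) (φ (gen M t))) ∧
  (∀ s t : S, (∃ l, IsLeftLcm l (φ (gen M s)) (φ (gen M t))) →
      ∃ l, IsLeftLcm l (gen M s) (gen M t))

/-- `p_≺(s)`: the generators left-dividing `φ(s)`. -/
def pL {M : ArtinMatrix S} {M' : ArtinMatrix S'}
    (φ : ArtinMonoid M →* ArtinMonoid M') (s : S) : Set S' :=
  {t : S' | gen M' t ∣ φ (gen M s)}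

/-- `p_≻(s)`: the generators right-dividing `φ(s)`. -/
def pR {M : ArtinMatrix S} {M' : ArtinMatrix S'}
    (φ : ArtinMonoid M →* ArtinMonoid M') (s : S) : Set S' :=
  {t : S' | RDvd (gen M' t) (φ (gen M s))}

/-- A symmetric lcm-homomorphism: `p_≺(s) = p_≻(s)` for all `s`. -/
def SymmetricHom {M : ArtinMatrix S} {M' : ArtinMatrix S'}
    (φ : ArtinMonoid M →* ArtinMonoid M') : Prop :=
  ∀ s : S, pL φ s = pR φ s

/-- QF-injectivity: reduced elements map injectively to reduced elements. -/
def QFInjective (M : ArtinMatrix S) (M' : ArtinMatrix S')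
    (φ : ArtinMonoid M →* ArtinMonoid M') : Prop :=
  (∀ g, Reduced M g → Reduced M' (φ g)) ∧ Set.InjOn φ {g | Reduced M g}


/-- The word `w` viewed in the free group. -/
def grpWord (w : List S) : FreeGroup S := (w.map FreeGroup.of).prod

/-- The braid relators in the free group. -/
def braidRelsGrp (M : ArtinMatrix S) : Set (FreeGroup S) :=
  {r | ∃ s t : S, s ≠ t ∧ M.m s t ≠ 0 ∧
      r = grpWord (altWord s t (M.m s t)) * (grpWord (altWord t s (M.m s t)))⁻¹}

/-- The Artin–Tits group `A_S`. -/
def ArtinGroup (M : ArtinMatrix S) := PresentedGroup (braidRelsGrp M)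

instance (M : ArtinMatrix S) : Group (ArtinGroup M) :=
  inferInstanceAs (Group (PresentedGroup (braidRelsGrp M)))

/-- The generator of `A_S` associated to `s ∈ S`. -/
def ggen (M : ArtinMatrix S) (s : S) : ArtinGroup M := PresentedGroup.of s

/-- The positive monoid `A_S^+` inside `A_S`. -/
def posMonoid (M : ArtinMatrix S) : Submonoid (ArtinGroup M) :=
  Submonoid.closure (Set.range (ggen M))

/-- Left divisibility in the positive cone of `A_S`. -/
def PosDvd (M : ArtinMatrix S) (a b : ArtinGroup M) : Prop :=
  ∃ c ∈ posMonoid M, b = a * c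

/-- `l` is the left lcm of `a` and `b` for positive divisibility. -/
def IsLcmPos (M : ArtinMatrix S) (l a b : ArtinGroup M) : Prop :=
  PosDvd M a l ∧ PosDvd M b l ∧ ∀ e, PosDvd M a e → PosDvd M b e → PosDvd M l e

/-- The standard parabolic subgroup `A_T`. -/
def parabolic (M : ArtinMatrix S) (T : Set S) : Subgroup (ArtinGroup M) :=
  Subgroup.closure (ggen M '' T)

/-- The coset `x·A_X`, a vertex of the Deligne complex when `X` is spherical. -/
def VCoset (M : ArtinMatrix S) (x : ArtinGroup M) (X : Set S) : Set (ArtinGroup M) :=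
  x • (parabolic M X : Set (ArtinGroup M))

/-- `Δ` is the Garside element `Δ_T` of the parabolic on `T`, inside the group:
a positive element which is the left lcm of the generators in `T`. -/
def IsDeltaOfG (M : ArtinMatrix S) (Δ : ArtinGroup M) (T : Set S) : Prop :=
  Δ ∈ posMonoid M ∧ (∀ t ∈ T, PosDvd M (ggen M t) Δ) ∧
    ∀ g ∈ posMonoid M, (∀ t ∈ T, PosDvd M (ggen M t) g) → PosDvd M Δ g

/-- The data of an LCM-homomorphism, group level. -/
structure LCMHomG (M : ArtinMatrix S) (M' : ArtinMatrix S') where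
  p : S → Set S'
  p_ne : ∀ s, (p s).Nonempty
  L0 : ∀ s t, s ≠ t → Disjoint (p s) (p t)
  L1 : ∀ s, Spherical M' (p s)
  Δ : S → ArtinGroup M'
  hΔ : ∀ s, IsDeltaOfG M' (Δ s) (p s)
  L2 : ∀ s t, s ≠ t → M.m s t ≠ 0 →
    altProd (Δ s) (Δ t) (M.m s t) = altProd (Δ t) (Δ s) (M.m s t) ∧
    IsLcmPos M' (altProd (Δ s) (Δ t) (M.m s t)) (Δ s) (Δ t)
  L3 : ∀ s t, s ≠ t → M.m s t = 0 →
    (∀ u ∈ p s, ¬ Spherical M' (insert u (p t))) ∧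
    (∀ u ∈ p t, ¬ Spherical M' (insert u (p s)))

def pSetG {M : ArtinMatrix S} {M' : ArtinMatrix S'} (P : LCMHomG M M') (X : Set S) : Set S' :=
  ⋃ s ∈ X, P.p s

/-- FC type: every subset without infinite bonds is of spherical type. -/
def FC (M : ArtinMatrix S) : Prop :=
  ∀ T : Set S, (∀ s ∈ T, ∀ t ∈ T, M.m s t ≠ 0) → Spherical M T

/-- The vertex set of the cube `K(aA_R, aA_T)` of the Deligne complex. -/
def CubeSet (M : ArtinMatrix S) (a : ArtinGroup M) (R T : Set S) :
    Set (Set (ArtinGroup M)) :=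
  {D | ∃ X : Set S, R ⊆ X ∧ X ⊆ T ∧ D = VCoset M a X}

/-- A cube of (the cubical structure of) the Deligne complex. -/
def IsCube (M : ArtinMatrix S) (C : Set (Set (ArtinGroup M))) : Prop :=
  ∃ (a : ArtinGroup M) (R T : Set S), R ⊆ T ∧ Spherical M T ∧ C = CubeSet M a R T

/-- `C` is the span of `K₁` and `K₂`: the smallest cube containing both. -/
def IsSpan (M : ArtinMatrix S) (C K₁ K₂ : Set (Set (ArtinGroup M))) : Prop :=
  IsCube M C ∧ K₁ ⊆ C ∧ K₂ ⊆ C ∧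
    ∀ C', IsCube M C' → K₁ ⊆ C' → K₂ ⊆ C' → C ⊆ C'

/-- The (vertex set of the) star `Et(C)` of a cube: union of all cubes containing `C`. -/
def EtStar (M : ArtinMatrix S) (C : Set (Set (ArtinGroup M))) : Set (Set (ArtinGroup M)) :=
  ⋃₀ {C' | IsCube M C' ∧ C ⊆ C'}

/-- `v 0, …, v n` is a normal cube path with cubes `C 1, …, C n`
(and the degenerate convention `C 0 = {v 0}`). -/
def IsNormalCubePath (M : ArtinMatrix S) (n : ℕ) (v : ℕ → Set (ArtinGroup M))
    (C : ℕ → Set (Set (ArtinGroup M))) : Prop :=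
  (∀ i ≤ n, ∃ (x : ArtinGroup M) (X : Set S), Spherical M X ∧ v i = VCoset M x X) ∧
  C 0 = {v 0} ∧
  (∀ i, 1 ≤ i → i ≤ n → IsSpan M (C i) {v (i - 1)} {v i}) ∧
  (∀ i, i + 1 ≤ n → EtStar M (C i) ∩ C (i + 1) = {v i})

/-- The free monoid on one generator as an Artin monoid. -/
def M1 : ArtinMatrix Unit where
  m _ _ := 1
  symm _ _ := rfl
  diag _ := rfl
  off_ne_one s t h := absurd (Subsingleton.elim s t) h

/-- The free monoid on two generators (`false = x`, `true = y`) as an Artin monoid. -/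
def M2 : ArtinMatrix Bool where
  m s t := if s = t then 1 else 0
  symm s t := by
    show (if s = t then 1 else 0) = (if t = s then 1 else 0)
    by_cases h : s = t
    · rw [if_pos h, if_pos h.symm]
    · rw [if_neg h, if_neg (Ne.symm h)]
  diag s := by show (if s = s then 1 else 0) = 1; simp
  off_ne_one s t h := by show (if s = t then 1 else 0) ≠ 1; simp [h]

/-! ### Auxiliary lemmas for Statement 13 -/

lemma braidRel_M1 : ∀ x y, ¬ braidRel M1 x y := by
  rintro x y ⟨s, t, hst, -⟩
  exact hst (Subsingleton.elim s t)

lemma braidRel_M2 : ∀ x y, ¬ braidRel M2 x y := by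
  rintro x y ⟨s, t, hst, hm, -⟩
  apply hm
  show (if s = t then 1 else 0) = 0
  simp [hst]

lemma artinCon_le_bot {M : ArtinMatrix S} (h : ∀ x y, ¬ braidRel M x y) :
    artinCon M ≤ ⊥ :=
  Con.conGen_le.mpr fun x y hxy => absurd hxy (h x y)

lemma mk_inj {M : ArtinMatrix S} (h : ∀ x y, ¬ braidRel M x y) {w w' : List S}
    (he : mk M w = mk M w') : w = w' := by
  have h1 : artinCon M (FreeMonoid.ofList w) (FreeMonoid.ofList w') := (Con.eq _).mp he
  have h2 : FreeMonoid.ofList w = FreeMonoid.ofList w' := artinCon_le_bot h h1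
  simpa using congrArg FreeMonoid.toList h2

lemma mk_surj {M : ArtinMatrix S} (g : ArtinMonoid M) : ∃ w, mk M w = g := by
  obtain ⟨y, rfl⟩ := Con.mk'_surjective g
  exact ⟨FreeMonoid.toList y, rfl⟩

lemma mk_append {M : ArtinMatrix S} (u v : List S) :
    mk M (u ++ v) = mk M u * mk M v := by
  unfold mk
  rw [FreeMonoid.ofList_append, map_mul]
  rfl

lemma mk_nil {M : ArtinMatrix S} : mk M ([] : List S) = 1 :=
  map_one (artinCon M).mk'

lemma mk_dvd_iff {M : ArtinMatrix S} (h : ∀ x y, ¬ braidRel M x y) {u w : List S} :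
    mk M u ∣ mk M w ↔ u <+: w := by
  constructor
  · rintro ⟨c, hc⟩
    obtain ⟨v, rfl⟩ := mk_surj c
    rw [← mk_append] at hc
    exact ⟨v, (mk_inj h hc).symm⟩
  · rintro ⟨v, rfl⟩
    exact ⟨mk M v, (mk_append u v).symm⟩

lemma reduced_mk_iff {M : ArtinMatrix S} (h : ∀ x y, ¬ braidRel M x y) (w : List S) :
    Reduced M (mk M w) ↔ ¬ HasSquare w := by
  constructor
  · intro hr; exact hr w rfl
  · intro hw w' hw'; rw [mk_inj h hw']; exact hw

lemma not_hasSquare_of_chain' {w : List S} (h : w.Chain' (· ≠ ·)) : ¬ HasSquare w := by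
  rintro ⟨u, v, s, rfl⟩
  rw [List.Chain', List.isChain_append] at h
  exact (List.isChain_cons_cons.mp h.2.1).1 rfl

lemma not_hasSquare_of_len_le_one {w : List S} (h : w.length ≤ 1) : ¬ HasSquare w := by
  rintro ⟨u, v, s, rfl⟩
  simp at h
  omega

lemma hasSquare_replicate (n : ℕ) (h : 2 ≤ n) : HasSquare (List.replicate n ()) := by
  obtain ⟨m, rfl⟩ : ∃ m, n = m + 2 := ⟨n - 2, by omega⟩
  exact ⟨[], List.replicate m (), (), by simp [List.replicate_succ]⟩

lemma unit_word (w : List Unit) : w = List.replicate w.length () := by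
  induction w with
  | nil => rfl
  | cons a w ih =>
    cases a
    rw [List.length_cons, List.replicate_succ]
    exact congrArg _ ih

/-- The word `(xy)^n` in the free monoid on two letters. -/
def twoL : ℕ → List Bool
  | 0 => []
  | n + 1 => false :: true :: twoL n

lemma twoL_length (n : ℕ) : (twoL n).length = 2 * n := by
  induction n with
  | zero => rfl
  | succ n ih => simp only [twoL, List.length_cons, ih]; omega

lemma isLeftLcm_self {A : Type*} [Monoid A] (a : A) : IsLeftLcm a a a :=
  ⟨dvd_refl a, dvd_refl a, fun _ h _ => h⟩

lemma phi_replicate (φ : ArtinMonoid M1 →* ArtinMonoid M2)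
    (hφ : φ (gen M1 ()) = mk M2 [false, true]) (n : ℕ) :
    φ (mk M1 (List.replicate n ())) = mk M2 (twoL n) := by
  induction n with
  | zero => rw [List.replicate_zero, mk_nil, map_one]; exact mk_nil.symm
  | succ n ih =>
    have h1 : List.replicate (n + 1) () = [()] ++ List.replicate n () := rfl
    have h2 : mk M1 [()] = gen M1 () := rfl
    rw [h1, mk_append, map_mul, ih, h2, hφ, ← mk_append]
    rfl


/-- the map `t ↦ xy` from the free monoid on one generator to the free
monoid on two generators is an injective lcm-homomorphism, but it does not commute with
the head function `α`: `α(φ(t²)) = xyxy` while `φ(α(t²)) = φ(t) = xy ≠ xyxy`. -/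
theorem stmt13 (φ : ArtinMonoid M1 →* ArtinMonoid M2)
    (hφ : φ (gen M1 ()) = mk M2 [false, true]) :
    Function.Injective φ ∧ IsLcmHom M1 M2 φ ∧
    IsHead M2 (mk M2 [false, true, false, true]) (φ (gen M1 () * gen M1 ())) ∧
    (∀ h, IsHead M1 h (gen M1 () * gen M1 ()) → φ h = mk M2 [false, true]) ∧
    mk M2 [false, true, false, true] ≠ mk M2 [false, true] := by
  have hgen : gen M1 () = mk M1 [()] := rfl
  have hprod : φ (gen M1 () * gen M1 ()) = mk M2 [false, true, false, true] := by
    rw [map_mul, hφ, ← mk_append]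
    rfl
  refine ⟨?_, ⟨?_, ?_, ?_⟩, ⟨?_, ?_, ?_⟩, ?_, ?_⟩
  · -- injectivity
    intro a b hab
    obtain ⟨w, rfl⟩ := mk_surj a
    obtain ⟨w', rfl⟩ := mk_surj b
    rw [unit_word w, unit_word w'] at hab ⊢
    rw [phi_replicate φ hφ, phi_replicate φ hφ] at hab
    have h1 := congrArg List.length (mk_inj braidRel_M2 hab)
    rw [twoL_length, twoL_length] at h1
    have h2 : w.length = w'.length := by omega
    rw [h2]
  · -- φ(gen) ≠ 1
    intro s
    cases s
    rw [hφ]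
    intro h1
    have h2 := mk_inj braidRel_M2 (h1.trans mk_nil.symm)
    simp at h2
  · -- preserves lcms
    intro s t l hl
    cases s; cases t
    obtain ⟨w, rfl⟩ := mk_surj l
    have h1 : [()] <+: w := (mk_dvd_iff braidRel_M1).mp (hgen ▸ hl.1)
    have h2 : w <+: [()] :=
      (mk_dvd_iff braidRel_M1).mp (hgen ▸ hl.2.2 _ dvd_rfl dvd_rfl)
    have h3 : w = [()] := h2.eq_of_length (le_antisymm h2.length_le h1.length_le)
    rw [h3, ← hgen]
    exact isLeftLcm_self _
  · -- reflects lcms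
    intro s t _
    cases s; cases t
    exact ⟨gen M1 (), isLeftLcm_self _⟩
  · -- head is reduced
    exact (reduced_mk_iff braidRel_M2 _).mpr (not_hasSquare_of_chain' (by simp [List.Chain']))
  · -- head divides
    rw [hprod]
  · -- head maximality (trivial here)
    intro h' _ hd
    rwa [hprod] at hd
  · -- φ(α(t²)) = xy
    intro h hh
    have hgg : gen M1 () * gen M1 () = mk M1 [(), ()] := (mk_append [()] [()]).symm
    obtain ⟨w, rfl⟩ := mk_surj h
    have hdvd : w <+: [(), ()] := (mk_dvd_iff braidRel_M1).mp (hgg ▸ hh.2.1)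
    have hred : ¬ HasSquare w := hh.1 w rfl
    have hle1 : w.length ≤ 1 := by
      by_contra hc
      exact hred (unit_word w ▸ hasSquare_replicate w.length (by omega))
    have hredgen : Reduced M1 (mk M1 [()]) :=
      (reduced_mk_iff braidRel_M1 _).mpr (not_hasSquare_of_len_le_one (by simp))
    have hgd : gen M1 () ∣ gen M1 () * gen M1 () := dvd_mul_right _ _
    have hmax : mk M1 [()] ∣ mk M1 w := hh.2.2 _ (hgen ▸ hredgen) (hgen ▸ hgd)
    have hge1 : 1 ≤ w.length := ((mk_dvd_iff braidRel_M1).mp hmax).length_le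
    have hw : w = [()] := by
      rw [unit_word w]
      have : w.length = 1 := le_antisymm hle1 hge1
      rw [this]
      rfl
    rw [hw, ← hgen, hφ]
  · -- xyxy ≠ xy
    intro he
    have := mk_inj braidRel_M2 he
    simp at this

end ArtinPaper
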